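/- Let F be a field, X a small category, S a full subcategory of X, and Lan : rep(S, Vect_F) → rep(X, Vect_F) the (pointwise) left Kan extension along the inclusion S ↪ X. A representation R ∈ rep(S, Vect_F) lies in the additive image of free : rep(S, Set) → rep(S, Vect_F) if and only if Lan(R) lies in the additive image of free : rep(X, Set) → rep(X, Vect_F). -/

import Mathlib

/-!
Both `Lan` along `ι` and restriction along `ι` are additive, so they carry additive images to
additive images as soon as they intertwine the two `free` functors. Restriction commutes with
`free` on the nose; `Lan` commutes with it up to isomorphism because `free`, being a left adjoint,
preserves the colimits computing pointwise left Kan extensions. Since `ι` is fully faithful,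
restricting `Lan(R)` gives back `R`, which yields the converse.
-/

open CategoryTheory CategoryTheory.Limits

/-- The additive image of a functor `T` into an additive category. -/
def AdditiveImage {C : Type*} {A : Type*} [Category C] [Category A] [Preadditive A]
    [HasBinaryBiproducts A] (T : C ⥤ A) (Y : A) : Prop :=
  ∃ (Z : C) (Y' : A), Nonempty (Y ⊞ Y' ≅ T.obj Z)

namespace AdditiveImage

variable {C C' A B : Type*} [Category C] [Category C'] [Category A] [Category B]
  [Preadditive A] [Preadditive B] [HasBinaryBiproducts A] [HasBinaryBiproducts B]

lemma of_iso {T : C ⥤ A} {Y₁ Y₂ : A} (e : Y₁ ≅ Y₂) (h : AdditiveImage T Y₂) :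
    AdditiveImage T Y₁ := by
  obtain ⟨Z, Y', ⟨f⟩⟩ := h
  exact ⟨Z, Y', ⟨biprod.mapIso e (Iso.refl Y') ≪≫ f⟩⟩

lemma map {T : C ⥤ A} {T' : C' ⥤ B} (G : A ⥤ B) [G.Additive] (H : C ⥤ C')
    (e : T ⋙ G ≅ H ⋙ T') {Y : A} (h : AdditiveImage T Y) : AdditiveImage T' (G.obj Y) := by
  have := preservesBinaryBiproducts_of_preservesBiproducts G
  obtain ⟨Z, Y', ⟨f⟩⟩ := h
  exact ⟨H.obj Z, G.obj Y', ⟨(G.mapBiprod Y Y').symm ≪≫ G.mapIso f ≪≫ e.app Z⟩⟩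

end AdditiveImage

namespace CategoryTheory.Functor

variable {S X : Type*} [Category S] [Category X] (ι : S ⥤ X)

instance lan_additive {H : Type*} [Category H] [Preadditive H]
    [∀ R : S ⥤ H, ι.HasLeftKanExtension R] : (ι.lan : (S ⥤ H) ⥤ (X ⥤ H)).Additive :=
  (ι.lanAdjunction H).left_adjoint_additive

end CategoryTheory.Functor

/-- For a full subcategory inclusion `ι : S ⥤ X` and the left Kan extension
`Lan : rep(S, Vect_F) ⥤ rep(X, Vect_F)` along `ι`, a representation `R` of `S` lies in the
additive image of `free` over `S` iff `Lan(R)` lies in the additive image of `free` over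
`X`. -/
theorem stmt11 (S X : Type) [SmallCategory S] [SmallCategory X]
    (ι : S ⥤ X) [ι.Full] [ι.Faithful]
    (F : Type) [Field F] (R : S ⥤ ModuleCat.{0} F) :
    AdditiveImage ((Functor.whiskeringRight S (Type 0) (ModuleCat.{0} F)).obj (ModuleCat.free F)) R ↔
    AdditiveImage ((Functor.whiskeringRight X (Type 0) (ModuleCat.{0} F)).obj (ModuleCat.free F))
      (ι.lan.obj R) := by
  have := (ModuleCat.adj F).leftAdjoint_preservesColimits
  constructor
  · exact AdditiveImage.map ι.lan ι.lan (Functor.lanCompIsoOfPreserves (ModuleCat.free F) ι).symm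
  · intro h
    exact .of_iso (asIso ((ι.lanAdjunction _).unit.app R))
      (h.map ((Functor.whiskeringLeft S X _).obj ι) ((Functor.whiskeringLeft S X _).obj ι)
        (Iso.refl _))
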